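/- arXiv:1602.06126 — 4 statements merged into one kernel-verified Lean document; each statement's English description precedes it below -/
import Mathlib

section
/- Let $\alpha_1,\dots,\alpha_k$ be positive real numbers with $\sum_{i=1}^k \alpha_i = n$. Then there is a constant $c>0$ such that for all points $x_1,\dots,x_k$ in the unit ball of $\mathbb{R}^n$ with $d=\sum_{1\le i<j\le k}|x_i-x_j|\le 1$, $\int_{|t|\le 2}\prod_{i=1}^k |t-x_i|^{-\alpha_i}\,dt \ge c\log(3/(2d))$. -/
/-!
Put `x₀ := x i₀` for any index `i₀`. Every `‖t - x i‖ ≤ ‖t - x₀‖ + d`, so on the annulus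
`d / 2 ≤ ‖t - x₀‖ ≤ 1`, which lies in the ball of radius `2`, each `‖t - x i‖ ≤ 3 ‖t - x₀‖`; as
`∑ α i = n`, the integrand is there at least `(3 ‖t - x₀‖) ^ (-n)`. In polar coordinates
`∫_{d/2 ≤ ‖s‖ ≤ 1} ‖s‖ ^ (-n) ds = n ω_n log (2 / d)`, and `log (2 / d) ≥ log (3 / (2 d))`.
-/

open MeasureTheory Finset

theorem Real.rpow_neg_sum_le_prod_rpow_neg {ι : Type*} (s : Finset ι) {α b : ι → ℝ} {M : ℝ}
    (hM : 0 < M) (hα : ∀ i ∈ s, 0 ≤ α i) (hb : ∀ i ∈ s, 0 < b i) (hbM : ∀ i ∈ s, b i ≤ M) :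
    M ^ (-∑ i ∈ s, α i) ≤ ∏ i ∈ s, b i ^ (-α i) := by
  rw [← sum_neg_distrib, Real.rpow_sum_of_pos hM]
  exact prod_le_prod (fun i _ => Real.rpow_nonneg hM.le _)
    fun i hi => Real.rpow_le_rpow_of_nonpos (hb i hi) (hbM i hi) (neg_nonpos.2 (hα i hi))

section Normed

variable {E : Type*} [NormedAddCommGroup E] {ι : Type*} [Fintype ι]

theorem norm_sub_le_sum_filter_lt_norm_sub [LinearOrder ι] (x : ι → E) (i j : ι) :
    ‖x i - x j‖ ≤ ∑ p ∈ univ.filter (fun p : ι × ι => p.1 < p.2), ‖x p.1 - x p.2‖ := by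
  have hnonneg : ∀ p ∈ univ.filter (fun p : ι × ι => p.1 < p.2), 0 ≤ ‖x p.1 - x p.2‖ :=
    fun _ _ => norm_nonneg _
  rcases lt_trichotomy i j with hij | rfl | hji
  · exact single_le_sum hnonneg (mem_filter.2 ⟨mem_univ (i, j), hij⟩)
  · simpa using sum_nonneg hnonneg
  · rw [norm_sub_rev]
    exact single_le_sum hnonneg (mem_filter.2 ⟨mem_univ (j, i), hji⟩)

theorem rpow_neg_sum_le_prod_norm_sub_rpow_neg {α : ι → ℝ} (hα : ∀ i, 0 ≤ α i) {x : ι → E}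
    {t x₀ : E} {d : ℝ} (hd : 0 < d) (hxd : ∀ i, ‖x i - x₀‖ ≤ d) (hdt : d ≤ 2 * ‖t - x₀‖)
    (ht : ∀ i, t ≠ x i) :
    (3 * ‖t - x₀‖) ^ (-∑ i, α i) ≤ ∏ i, ‖t - x i‖ ^ (-α i) := by
  refine Real.rpow_neg_sum_le_prod_rpow_neg _ (by linarith) (fun i _ => hα i)
    (fun i _ => norm_sub_pos_iff.2 (ht i)) fun i _ => ?_
  linarith [norm_sub_le_norm_sub_add_norm_sub t x₀ (x i), norm_sub_rev x₀ (x i), hxd i]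

end Normed

section Radial

open Set Metric Module

variable {E : Type*} [NormedAddCommGroup E] [NormedSpace ℝ E] [FiniteDimensional ℝ E]
  [MeasurableSpace E] [BorelSpace E] [Nontrivial E] (μ : Measure E) [μ.IsAddHaarMeasure]
  {a b : ℝ}

theorem eqOn_pow_pred_smul_indicator_inv_pow {n : ℕ} (hn : 0 < n) :
    EqOn (fun y : ℝ => y ^ (n - 1) • (Icc a b).indicator (fun r => (r ^ n)⁻¹) y)
      ((Icc a b).indicator Inv.inv) (Ioi 0) := by
  intro y (hy : 0 < y)
  by_cases hyab : y ∈ Icc a b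
  · obtain ⟨m, rfl⟩ := Nat.exists_eq_add_of_lt hn
    simp only [indicator_of_mem hyab, smul_eq_mul, Nat.zero_add, Nat.add_sub_cancel, pow_succ]
    field_simp
  · simp [indicator_of_notMem hyab]

theorem integrable_indicator_Icc_inv_pow_finrank_norm (ha : 0 < a) :
    Integrable (fun x : E => (Icc a b).indicator (fun r => (r ^ finrank ℝ E)⁻¹) ‖x‖) μ := by
  rw [integrable_fun_norm_addHaar μ,
    integrableOn_congr_fun (eqOn_pow_pred_smul_indicator_inv_pow finrank_pos) measurableSet_Ioi]
  exact ((integrable_indicator_iff measurableSet_Icc).2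
    (continuousOn_inv₀.mono fun y hy => (ha.trans_le hy.1).ne').integrableOn_Icc).integrableOn

theorem integral_indicator_Icc_inv_pow_finrank_norm (ha : 0 < a) (hab : a ≤ b) :
    ∫ x, (Icc a b).indicator (fun r => (r ^ finrank ℝ E)⁻¹) ‖x‖ ∂μ =
      finrank ℝ E * μ.real (ball 0 1) * Real.log (b / a) := by
  rw [integral_fun_norm_addHaar μ,
    setIntegral_congr_fun measurableSet_Ioi (eqOn_pow_pred_smul_indicator_inv_pow finrank_pos),
    setIntegral_indicator measurableSet_Icc,
    inter_eq_right.2 ((Icc_subset_Ioi_iff hab).2 ha), integral_Icc_eq_integral_Ioc,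
    ← intervalIntegral.integral_of_le hab, integral_inv_of_pos ha (ha.trans_le hab),
    nsmul_eq_mul, smul_eq_mul, mul_assoc]

theorem ofReal_mul_log_le_setLIntegral_prod_norm_sub_rpow_neg {ι : Type*} [Fintype ι]
    {α : ι → ℝ} (hα : ∀ i, 0 < α i) (hsum : ∑ i, α i = finrank ℝ E) (x : ι → E) {x₀ : E}
    {R d : ℝ} (hd : 0 < d) (hdR : d ≤ 2 * R) (hxd : ∀ i, ‖x i - x₀‖ ≤ d) {s : Set E}
    (hs : closedBall x₀ R ⊆ s) :
    ENNReal.ofReal (finrank ℝ E * μ.real (ball 0 1) / 3 ^ finrank ℝ E * Real.log (2 * R / d)) ≤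
      ∫⁻ t in s, ENNReal.ofReal (∏ i, ‖t - x i‖ ^ (-α i)) ∂μ := by
  set n := finrank ℝ E
  set F : ℝ → ℝ := (Icc (d / 2) R).indicator fun r => (r ^ n)⁻¹
  have hF : ∀ r, 0 ≤ F r := fun r =>
    indicator_nonneg (fun r hr => inv_nonneg.2 (pow_nonneg ((half_pos hd).le.trans hr.1) _)) r
  have hsupp : (Function.support fun t => ENNReal.ofReal ((3 ^ n)⁻¹ * F ‖t - x₀‖)) ⊆ s := by
    intro t ht
    refine hs (mem_closedBall_iff_norm.2 (not_lt.1 fun hRt => ht ?_))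
    simp [F, indicator_of_notMem fun hr : ‖t - x₀‖ ∈ Icc (d / 2) R => hRt.not_ge hr.2]
  have hlower : ∀ᵐ t ∂μ.restrict s,
      ENNReal.ofReal ((3 ^ n)⁻¹ * F ‖t - x₀‖) ≤ ENNReal.ofReal (∏ i, ‖t - x i‖ ^ (-α i)) := by
    -- `0 ^ (-α i) = 0`, so the product vanishes at the points `x i` themselves.
    have hae : ∀ᵐ t ∂μ, ∀ i, t ≠ x i :=
      ae_all_iff.2 fun i => (countable_singleton (x i)).ae_notMem μ
    filter_upwards [ae_restrict_of_ae hae] with t ht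
    refine ENNReal.ofReal_le_ofReal ?_
    by_cases hr : ‖t - x₀‖ ∈ Icc (d / 2) R
    · have h := rpow_neg_sum_le_prod_norm_sub_rpow_neg (fun i => (hα i).le) hd hxd
        (by linarith [hr.1]) ht
      rwa [hsum, Real.rpow_neg (by linarith [hr.1]), Real.rpow_natCast, mul_pow, mul_inv,
        ← indicator_of_mem hr fun r => (r ^ n)⁻¹] at h
    · rw [show F ‖t - x₀‖ = 0 from indicator_of_notMem hr _, mul_zero]
      exact prod_nonneg fun i _ => Real.rpow_nonneg (norm_nonneg _) _
  calc ENNReal.ofReal (n * μ.real (ball 0 1) / 3 ^ n * Real.log (2 * R / d))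
      = ENNReal.ofReal (∫ t, (3 ^ n)⁻¹ * F ‖t‖ ∂μ) := by
        rw [integral_const_mul, integral_indicator_Icc_inv_pow_finrank_norm μ (half_pos hd)
          (by linarith), div_div_eq_mul_div, mul_comm R]
        simp only [n]
        ring_nf
    _ = ∫⁻ t, ENNReal.ofReal ((3 ^ n)⁻¹ * F ‖t‖) ∂μ :=
        ofReal_integral_eq_lintegral_ofReal
          ((integrable_indicator_Icc_inv_pow_finrank_norm μ (half_pos hd)).const_mul _)
          (ae_of_all _ fun t => mul_nonneg (by positivity) (hF _))
    _ = ∫⁻ t, ENNReal.ofReal ((3 ^ n)⁻¹ * F ‖t - x₀‖) ∂μ :=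
        (lintegral_sub_right_eq_self (fun t => ENNReal.ofReal ((3 ^ n)⁻¹ * F ‖t‖)) x₀).symm
    _ = ∫⁻ t in s, ENNReal.ofReal ((3 ^ n)⁻¹ * F ‖t - x₀‖) ∂μ :=
        (setLIntegral_eq_of_support_subset hsupp).symm
    _ ≤ ∫⁻ t in s, ENNReal.ofReal (∏ i, ‖t - x i‖ ^ (-α i)) ∂μ := lintegral_mono_ae hlower

end Radial

open Metric

theorem stmt_1 (n k : ℕ) (hn : 1 ≤ n) (hk : 2 ≤ k) (α : Fin k → ℝ)
    (hα : ∀ i, 0 < α i) (hsum : ∑ i, α i = (n : ℝ)) :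
    ∃ c > (0 : ℝ), ∀ x : Fin k → EuclideanSpace ℝ (Fin n),
      (∀ i, ‖x i‖ ≤ 1) →
      (∑ p ∈ Finset.univ.filter (fun p : Fin k × Fin k => p.1 < p.2), ‖x p.1 - x p.2‖) ≤ 1 →
      ENNReal.ofReal (c * Real.log (3 /
          (2 * ∑ p ∈ Finset.univ.filter (fun p : Fin k × Fin k => p.1 < p.2), ‖x p.1 - x p.2‖))) ≤
        ∫⁻ t in Metric.closedBall (0 : EuclideanSpace ℝ (Fin n)) 2,
          ENNReal.ofReal (∏ i, ‖t - x i‖ ^ (-α i)) := by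
  have hdim : Module.finrank ℝ (EuclideanSpace ℝ (Fin n)) = n := finrank_euclideanSpace_fin
  have : Nontrivial (EuclideanSpace ℝ (Fin n)) :=
    Module.nontrivial_of_finrank_pos (R := ℝ) (by omega)
  have hball : 0 < volume.real (ball (0 : EuclideanSpace ℝ (Fin n)) 1) :=
    ENNReal.toReal_pos (measure_ball_pos _ _ one_pos).ne' measure_ball_lt_top.ne
  refine ⟨n * volume.real (ball (0 : EuclideanSpace ℝ (Fin n)) 1) / 3 ^ n, by positivity,
    fun x hx hd₁ => ?_⟩
  set d := ∑ p ∈ univ.filter (fun p : Fin k × Fin k => p.1 < p.2), ‖x p.1 - x p.2‖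
  have hd_nonneg : 0 ≤ d := sum_nonneg fun p _ => norm_nonneg _
  rcases hd_nonneg.eq_or_lt with hd_zero | hd
  · -- `Real.log (3 / 0) = 0`
    rw [← hd_zero]
    simp
  obtain ⟨i₀⟩ : Nonempty (Fin k) := ⟨⟨0, by omega⟩⟩
  have hsum' : ∑ i, α i = Module.finrank ℝ (EuclideanSpace ℝ (Fin n)) := by rw [hsum, hdim]
  have hsub : closedBall (x i₀) 1 ⊆ closedBall 0 2 :=
    closedBall_subset_closedBall' (by rw [dist_zero_right]; linarith [hx i₀])
  have h := ofReal_mul_log_le_setLIntegral_prod_norm_sub_rpow_neg volume hα hsum' x hd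
    (by linarith) (fun i => norm_sub_le_sum_filter_lt_norm_sub x i i₀) hsub
  rw [hdim] at h
  refine le_trans (ENNReal.ofReal_le_ofReal ?_) h
  refine mul_le_mul_of_nonneg_left (Real.log_le_log (by positivity) ?_) (by positivity)
  rw [div_le_div_iff₀ (by positivity) hd]
  linarith
end

section
/- Let $0<\alpha_{12},\alpha_{13},\alpha_{23}$ be nonnegative reals satisfying $\alpha_{12}<n$, $\alpha_{13}<n$, $\alpha_{23}<n$, and $\alpha_{12}+\alpha_{13}+\alpha_{23}<2n$. Then $\int_{B^3} |x_1-x_2|^{-\alpha_{12}}|x_1-x_3|^{-\alpha_{13}}|x_2-x_3|^{-\alpha_{23}}\,dx_1\,dx_2\,dx_3 < \infty$, where $B$ is the unit ball in $\mathbb{R}^n$. -/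
/-!
Choose weights `w₁ + w₂ + w₃ = 1` with `α₁₂ < n (w₁ + w₂)`, `α₁₃ < n (w₁ + w₃)` and
`α₂₃ < n (w₂ + w₃)`; this is possible exactly because every `αᵢⱼ < n` and the sum is `< 2n`.
Writing the integrand as `a^(w₁+w₂) b^(w₁+w₃) c^(w₂+w₃)` for kernels `‖x - y‖^(-β)` with `β < n`,
weighted AM-GM bounds it by `ab + ac + bc`. In each of these products the two kernels share a
vertex; integrating out the two other variables first, each term is bounded by the product of the
row/column integrals of the kernels, which are uniformly finite on the ball since `‖x‖^(-β)` is
locally integrable for `β < n`.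
-/

open MeasureTheory Metric Set Function Module
open scoped ENNReal NNReal

theorem NNReal.rpow_add_mul_rpow_add_mul_rpow_add_le (p q r : ℝ≥0) {w₁ w₂ w₃ : ℝ}
    (hw₁ : 0 ≤ w₁) (hw₂ : 0 ≤ w₂) (hw₃ : 0 ≤ w₃) (hw : w₁ + w₂ + w₃ = 1) :
    p ^ (w₁ + w₂) * q ^ (w₁ + w₃) * r ^ (w₂ + w₃) ≤ p * q + p * r + q * r := by
  have h₁ : w₁ ≤ 1 := by linarith
  have h₂ : w₂ ≤ 1 := by linarith
  have h₃ : w₃ ≤ 1 := by linarith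
  lift w₁ to ℝ≥0 using hw₁
  lift w₂ to ℝ≥0 using hw₂
  lift w₃ to ℝ≥0 using hw₃
  norm_cast at h₁ h₂ h₃ hw
  calc p ^ ((w₁ : ℝ) + w₂) * q ^ ((w₁ : ℝ) + w₃) * r ^ ((w₂ : ℝ) + w₃)
      = (p * q) ^ (w₁ : ℝ) * (p * r) ^ (w₂ : ℝ) * (q * r) ^ (w₃ : ℝ) := by
        rw [NNReal.rpow_add_of_nonneg p w₁.coe_nonneg w₂.coe_nonneg,
          NNReal.rpow_add_of_nonneg q w₁.coe_nonneg w₃.coe_nonneg,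
          NNReal.rpow_add_of_nonneg r w₂.coe_nonneg w₃.coe_nonneg, NNReal.mul_rpow,
          NNReal.mul_rpow, NNReal.mul_rpow]
        ring
    _ ≤ w₁ * (p * q) + w₂ * (p * r) + w₃ * (q * r) :=
        NNReal.geom_mean_le_arith_mean3_weighted _ _ _ _ _ _ hw
    _ ≤ p * q + p * r + q * r :=
        add_le_add (add_le_add (mul_le_of_le_one_left' h₁) (mul_le_of_le_one_left' h₂))
          (mul_le_of_le_one_left' h₃)

theorem exists_weights_lt_mul_add {N a b c : ℝ} (ha : a < N) (hb : b < N) (hc : c < N)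
    (habc : a + b + c < 2 * N) :
    ∃ w₁ w₂ w₃ : ℝ, 0 < w₁ ∧ 0 < w₂ ∧ 0 < w₃ ∧ w₁ + w₂ + w₃ = 1 ∧
      a < N * (w₁ + w₂) ∧ b < N * (w₁ + w₃) ∧ c < N * (w₂ + w₃) := by
  have hD : 0 < 3 * N - (a + b + c) := by linarith
  refine ⟨(N - c) / (3 * N - (a + b + c)), (N - b) / (3 * N - (a + b + c)),
    (N - a) / (3 * N - (a + b + c)), div_pos (by linarith) hD, div_pos (by linarith) hD,
    div_pos (by linarith) hD, by rw [← add_div, ← add_div, div_eq_one_iff_eq hD.ne']; ring,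
    ?_, ?_, ?_⟩ <;>
  · rw [← add_div, mul_div_assoc', lt_div_iff₀ hD]
    nlinarith

section Kernels

variable {X : Type*} [MeasurableSpace X] {μ : Measure X}

/-- The hypothesis of Schur's test. -/
def IsSchurBounded (μ : Measure X) (k : X → X → ℝ≥0) : Prop :=
  ∃ C < ∞, (∀ᵐ x ∂μ, ∫⁻ y, k x y ∂μ ≤ C) ∧ ∀ᵐ y ∂μ, ∫⁻ x, k x y ∂μ ≤ C

theorem lintegral_lintegral_lintegral_mul_le {f g : X → X → ℝ≥0∞} (hf : Measurable (uncurry f))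
    (hg : Measurable (uncurry g)) {A C : ℝ≥0∞} (hA : ∀ᵐ x ∂μ, ∫⁻ y, f x y ∂μ ≤ A)
    (hC : ∀ᵐ x ∂μ, ∫⁻ z, g x z ∂μ ≤ C) :
    ∫⁻ x, ∫⁻ y, ∫⁻ z, f x y * g x z ∂μ ∂μ ∂μ ≤ A * C * μ univ :=
  calc ∫⁻ x, ∫⁻ y, ∫⁻ z, f x y * g x z ∂μ ∂μ ∂μ
      = ∫⁻ x, (∫⁻ y, f x y ∂μ) * ∫⁻ z, g x z ∂μ ∂μ := lintegral_congr fun x => by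
        simp_rw [lintegral_const_mul _ hg.of_uncurry_left]
        exact lintegral_mul_const _ hf.of_uncurry_left
    _ ≤ ∫⁻ _, A * C ∂μ := lintegral_mono_ae <| by
        filter_upwards [hA, hC] with x hAx hCx using mul_le_mul' hAx hCx
    _ = A * C * μ univ := lintegral_const _

theorem lintegral_lintegral_lintegral_add [SFinite μ] {F G : X → X → X → ℝ≥0∞}
    (hF : Measurable fun p : X × X × X => F p.1 p.2.1 p.2.2) :
    ∫⁻ x, ∫⁻ y, ∫⁻ z, F x y z + G x y z ∂μ ∂μ ∂μ =
      (∫⁻ x, ∫⁻ y, ∫⁻ z, F x y z ∂μ ∂μ ∂μ) + ∫⁻ x, ∫⁻ y, ∫⁻ z, G x y z ∂μ ∂μ ∂μ := by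
  rw [← lintegral_add_left (by fun_prop)]
  refine lintegral_congr fun x => ?_
  rw [← lintegral_add_left (by fun_prop)]
  exact lintegral_congr fun y => lintegral_add_left (by fun_prop) _

variable [IsFiniteMeasure μ] {a b c : X → X → ℝ≥0}

theorem IsSchurBounded.lintegral_mul_shared_outer_lt_top (ha : Measurable (uncurry a))
    (hb : Measurable (uncurry b)) (ha' : IsSchurBounded μ a) (hb' : IsSchurBounded μ b) :
    ∫⁻ x, ∫⁻ y, ∫⁻ z, (a x y * b x z : ℝ≥0∞) ∂μ ∂μ ∂μ < ∞ := by
  obtain ⟨A, hA, hAx, -⟩ := ha'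
  obtain ⟨B, hB, hBx, -⟩ := hb'
  exact (lintegral_lintegral_lintegral_mul_le (by fun_prop) (by fun_prop) hAx hBx).trans_lt
    (by finiteness)

theorem IsSchurBounded.lintegral_mul_shared_middle_lt_top (ha : Measurable (uncurry a))
    (hb : Measurable (uncurry b)) (ha' : IsSchurBounded μ a) (hb' : IsSchurBounded μ b) :
    ∫⁻ x, ∫⁻ y, ∫⁻ z, (a x y * b y z : ℝ≥0∞) ∂μ ∂μ ∂μ < ∞ := by
  obtain ⟨A, hA, -, hAy⟩ := ha'
  obtain ⟨B, hB, hBx, -⟩ := hb'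
  rw [lintegral_lintegral_swap (f := fun x y => ∫⁻ z, (a x y * b y z : ℝ≥0∞) ∂μ) (by fun_prop)]
  exact (lintegral_lintegral_lintegral_mul_le (f := fun y x => a x y) (by fun_prop) (by fun_prop)
    hAy hBx).trans_lt (by finiteness)

theorem IsSchurBounded.lintegral_mul_shared_inner_lt_top (ha : Measurable (uncurry a))
    (hb : Measurable (uncurry b)) (ha' : IsSchurBounded μ a) (hb' : IsSchurBounded μ b) :
    ∫⁻ x, ∫⁻ y, ∫⁻ z, (a x z * b y z : ℝ≥0∞) ∂μ ∂μ ∂μ < ∞ := by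
  obtain ⟨A, hA, -, hAy⟩ := ha'
  obtain ⟨B, hB, -, hBy⟩ := hb'
  have hswap (x : X) : ∫⁻ y, ∫⁻ z, (a x z * b y z : ℝ≥0∞) ∂μ ∂μ =
      ∫⁻ z, ∫⁻ y, (a x z * b y z : ℝ≥0∞) ∂μ ∂μ := lintegral_lintegral_swap (by fun_prop)
  rw [lintegral_congr hswap,
    lintegral_lintegral_swap (f := fun x z => ∫⁻ y, (a x z * b y z : ℝ≥0∞) ∂μ) (by fun_prop)]
  exact (lintegral_lintegral_lintegral_mul_le (f := fun z x => a x z) (g := fun z y => b y z)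
    (by fun_prop) (by fun_prop) hAy hBy).trans_lt (by finiteness)

theorem lintegral_rpow_mul_rpow_mul_rpow_lt_top (ha : Measurable (uncurry a))
    (hb : Measurable (uncurry b)) (hc : Measurable (uncurry c)) (ha' : IsSchurBounded μ a)
    (hb' : IsSchurBounded μ b) (hc' : IsSchurBounded μ c) {w₁ w₂ w₃ : ℝ} (hw₁ : 0 ≤ w₁)
    (hw₂ : 0 ≤ w₂) (hw₃ : 0 ≤ w₃) (hw : w₁ + w₂ + w₃ = 1) :
    ∫⁻ x, ∫⁻ y, ∫⁻ z,
      (a x y ^ (w₁ + w₂) * b x z ^ (w₁ + w₃) * c y z ^ (w₂ + w₃) : ℝ≥0) ∂μ ∂μ ∂μ < ∞ := by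
  calc _ ≤ ∫⁻ x, ∫⁻ y, ∫⁻ z, (a x y * b x z + a x y * c y z + b x z * c y z : ℝ≥0∞) ∂μ ∂μ ∂μ := by
        gcongr with x y z
        exact_mod_cast NNReal.rpow_add_mul_rpow_add_mul_rpow_add_le _ _ _ hw₁ hw₂ hw₃ hw
    _ = (∫⁻ x, ∫⁻ y, ∫⁻ z, (a x y * b x z : ℝ≥0∞) ∂μ ∂μ ∂μ) +
          (∫⁻ x, ∫⁻ y, ∫⁻ z, (a x y * c y z : ℝ≥0∞) ∂μ ∂μ ∂μ) +
          ∫⁻ x, ∫⁻ y, ∫⁻ z, (b x z * c y z : ℝ≥0∞) ∂μ ∂μ ∂μ := by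
        rw [lintegral_lintegral_lintegral_add (by fun_prop),
          lintegral_lintegral_lintegral_add (by fun_prop)]
    _ < ∞ := by
        have := ha'.lintegral_mul_shared_outer_lt_top ha hb hb'
        have := ha'.lintegral_mul_shared_middle_lt_top ha hc hc'
        have := hb'.lintegral_mul_shared_inner_lt_top hb hc hc'
        finiteness

end Kernels

section Riesz

variable {E : Type*} [NormedAddCommGroup E] [MeasurableSpace E] [BorelSpace E] {μ : Measure E}

theorem setLIntegral_ball_comp_sub_le [μ.IsAddRightInvariant] (f : E → ℝ≥0∞) {r : ℝ} {y : E}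
    (hy : y ∈ ball (0 : E) r) :
    ∫⁻ x in ball 0 r, f (x - y) ∂μ ≤ ∫⁻ x in ball 0 (2 * r), f x ∂μ := by
  have hsub : ball (0 : E) r ⊆ (· - y) ⁻¹' ball 0 (2 * r) := fun x hx => by
    rw [mem_ball_zero_iff] at hx hy
    rw [mem_preimage, mem_ball_zero_iff]
    linarith [norm_sub_le x y]
  calc ∫⁻ x in ball 0 r, f (x - y) ∂μ ≤ ∫⁻ x in (· - y) ⁻¹' ball 0 (2 * r), f (x - y) ∂μ :=
        lintegral_mono_set hsub
    _ = ∫⁻ x in ball 0 (2 * r), f x ∂μ :=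
        (measurePreserving_sub_right μ y).setLIntegral_comp_preimage_emb
          (measurableEmbedding_subRight y) f _

variable [NormedSpace ℝ E] [FiniteDimensional ℝ E] [μ.IsAddHaarMeasure]

theorem setLIntegral_ball_nnnorm_rpow_neg_lt_top (hd : 1 ≤ finrank ℝ E) {β : ℝ}
    (hβ : β < finrank ℝ E) (r : ℝ) :
    ∫⁻ x in ball (0 : E) r, (‖x‖₊ ^ (-β) : ℝ≥0) ∂μ < ∞ := by
  have hloc : LocallyIntegrable (fun x : E => ‖x‖ ^ (-β)) μ :=
    locallyIntegrable_of_norm_le_rpow (C := 1) hd hβ (ae_of_all _ fun x => by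
      rw [one_mul, Real.norm_of_nonneg (by positivity)])
      (measurable_norm.pow_const _).aestronglyMeasurable
  have := ((hloc.integrableOn_isCompact (isCompact_closedBall 0 r)).mono_set
    ball_subset_closedBall).lintegral_lt_top
  simpa [← ENNReal.ofReal_coe_nnreal] using this

theorem isSchurBounded_nnnorm_sub_rpow_neg (hd : 1 ≤ finrank ℝ E) {β : ℝ}
    (hβ : β < finrank ℝ E) (r : ℝ) :
    IsSchurBounded (μ.restrict (ball 0 r)) fun x y => ‖x - y‖₊ ^ (-β) := by
  refine ⟨_, setLIntegral_ball_nnnorm_rpow_neg_lt_top (μ := μ) hd hβ (2 * r), ?_, ?_⟩ <;>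
    refine ae_restrict_of_forall_mem measurableSet_ball fun y hy => ?_
  · simpa only [← nndist_eq_nnnorm, nndist_comm y] using
      setLIntegral_ball_comp_sub_le (fun z => (‖z‖₊ ^ (-β) : ℝ≥0)) hy
  · exact setLIntegral_ball_comp_sub_le (fun z => (‖z‖₊ ^ (-β) : ℝ≥0)) hy

end Riesz

theorem stmt_3_general (n : ℕ) (hn : 1 ≤ n) (α₁₂ α₁₃ α₂₃ : ℝ)
    (h12n : α₁₂ < n) (h13n : α₁₃ < n) (h23n : α₂₃ < n)
    (hsum : α₁₂ + α₁₃ + α₂₃ < 2 * n) :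
    ∫⁻ x₁ in Metric.ball (0 : EuclideanSpace ℝ (Fin n)) 1,
      ∫⁻ x₂ in Metric.ball (0 : EuclideanSpace ℝ (Fin n)) 1,
        ∫⁻ x₃ in Metric.ball (0 : EuclideanSpace ℝ (Fin n)) 1,
          ENNReal.ofReal (‖x₁ - x₂‖ ^ (-α₁₂) * ‖x₁ - x₃‖ ^ (-α₁₃) * ‖x₂ - x₃‖ ^ (-α₂₃)) < ⊤ := by
  obtain ⟨w₁, w₂, w₃, hw₁, hw₂, hw₃, hw, h₁₂, h₁₃, h₂₃⟩ :=
    exists_weights_lt_mul_add h12n h13n h23n hsum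
  have : IsFiniteMeasure (volume.restrict (ball (0 : EuclideanSpace ℝ (Fin n)) 1)) :=
    isFiniteMeasure_restrict.2 measure_ball_lt_top.ne
  have hd : 1 ≤ finrank ℝ (EuclideanSpace ℝ (Fin n)) := by simpa using hn
  have hK {α u : ℝ} (hu : 0 < u) (hα : α < n * u) :=
    isSchurBounded_nnnorm_sub_rpow_neg (μ := volume) hd (β := α / u)
      (by rwa [finrank_euclideanSpace_fin, div_lt_iff₀ hu]) 1
  have hpow {α u : ℝ} (hu : 0 < u) (t : ℝ≥0) : (t ^ (-(α / u))) ^ u = t ^ (-α) := by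
    rw [← NNReal.rpow_mul, neg_mul, div_mul_cancel₀ _ hu.ne']
  convert lintegral_rpow_mul_rpow_mul_rpow_lt_top (by fun_prop) (by fun_prop) (by fun_prop)
    (hK (by positivity) h₁₂) (hK (by positivity) h₁₃) (hK (by positivity) h₂₃)
    hw₁.le hw₂.le hw₃.le hw using 7 with x₁ - x₂ - x₃ -
  simp only [hpow (by positivity : 0 < w₁ + w₂), hpow (by positivity : 0 < w₁ + w₃),
    hpow (by positivity : 0 < w₂ + w₃), ← ENNReal.ofReal_coe_nnreal, NNReal.coe_mul,
    NNReal.coe_rpow, coe_nnnorm]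

theorem stmt_3 (n : ℕ) (hn : 1 ≤ n) (α₁₂ α₁₃ α₂₃ : ℝ)
    (h12 : 0 ≤ α₁₂) (h13 : 0 ≤ α₁₃) (h23 : 0 ≤ α₂₃)
    (h12n : α₁₂ < n) (h13n : α₁₃ < n) (h23n : α₂₃ < n)
    (hsum : α₁₂ + α₁₃ + α₂₃ < 2 * n) :
    ∫⁻ x₁ in Metric.ball (0 : EuclideanSpace ℝ (Fin n)) 1,
      ∫⁻ x₂ in Metric.ball (0 : EuclideanSpace ℝ (Fin n)) 1,
        ∫⁻ x₃ in Metric.ball (0 : EuclideanSpace ℝ (Fin n)) 1,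
          ENNReal.ofReal (‖x₁ - x₂‖ ^ (-α₁₂) * ‖x₁ - x₃‖ ^ (-α₁₃) * ‖x₂ - x₃‖ ^ (-α₂₃)) < ⊤ :=
  stmt_3_general n hn α₁₂ α₁₃ α₂₃ h12n h13n h23n hsum
end

section
/- Let $k\ge 1$, $\alpha_{ij}\ge 0$ for $1\le i<j\le k+1$, and suppose there exists a subset $J\subseteq\{1,\dots,k+1\}$ with $|J|\ge 2$ and $\sum_{i<j,\,i,j\in J}\alpha_{ij} \ge (|J|-1)n$. Then $\int_{B^{k+1}} \prod_{1\le i<j\le k+1}|x_i-x_j|^{-\alpha_{ij}}\,dx_1\cdots dx_{k+1} = \infty$, where $B$ is the unit ball of $\mathbb{R}^n$. -/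
open MeasureTheory Finset Metric Function Module
open scoped ENNReal Pointwise

/-! Fix `j ∈ J`. For `r = 2⁻ᵗ⁻¹`, consider the configurations with `‖x_j‖ < 1/2`,
`r/2 < ‖x_i - x_j‖ < r` for `i ∈ J \ {j}` and `‖x_i‖ < 1` for `i ∉ J`. Shearing `x_i ↦ x_i - x_j`
shows that this set has measure `≍ r ^ (n (|J| - 1))`, while on it all `J`-distances are `< 2r` and
all others `< 2`, so the integrand is `≳ r ^ (-∑_J α_ij)`. As `∑_J α_ij ≥ (|J| - 1) n`, each of
these infinitely many pairwise disjoint sets contributes a fixed positive amount to the integral. -/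

section Divergence

variable {α : Type*} [MeasurableSpace α] {μ : Measure α}

theorem setLIntegral_eq_top_of_pairwise_disjoint {f : α → ℝ≥0∞} {s : Set α} {A : ℕ → Set α}
    {c : ℝ≥0∞} (hc : c ≠ 0) (hA : ∀ t, MeasurableSet (A t)) (hdisj : Pairwise (Disjoint on A))
    (hsub : ∀ t, A t ⊆ s) (hle : ∀ t, c ≤ ∫⁻ x in A t, f x ∂μ) : ∫⁻ x in s, f x ∂μ = ⊤ := by
  refine eq_top_iff.2 ?_
  calc ⊤ = ∑' _ : ℕ, c := (ENNReal.tsum_const_eq_top_of_ne_zero hc).symm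
    _ ≤ ∑' t, ∫⁻ x in A t, f x ∂μ := ENNReal.tsum_le_tsum hle
    _ = ∫⁻ x in ⋃ t, A t, f x ∂μ := (lintegral_iUnion hA hdisj f).symm
    _ ≤ ∫⁻ x in s, f x ∂μ := lintegral_mono_set (Set.iUnion_subset hsub)

end Divergence

section Shear

variable {E : Type*} [AddCommGroup E] [MeasurableSpace E] [MeasurableAdd E] [MeasurableSub₂ E]

theorem measure_pi_setOf_sub_ite_mem {m : ℕ} (μ : Measure E) [SigmaFinite μ]
    [μ.IsAddRightInvariant] {j : Fin (m + 1)} {K : Finset (Fin (m + 1))} (hj : j ∉ K)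
    {S : Fin (m + 1) → Set E} (hS : ∀ i, MeasurableSet (S i)) :
    Measure.pi (fun _ => μ) {X | ∀ i, X i - (if i ∈ K then X j else 0) ∈ S i}
      = ∏ i, μ (S i) := by
  set T : E × (Fin m → E) → E × (Fin m → E) :=
    fun p => (p.1, fun l => p.2 l - if j.succAbove l ∈ K then p.1 else 0)
  have hT : MeasurePreserving T (μ.prod (.pi fun _ => μ)) (μ.prod (.pi fun _ => μ)) :=
    (MeasurePreserving.id μ).skew_product
      (g := fun (x : E) (Y : Fin m → E) l => Y l - if j.succAbove l ∈ K then x else 0)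
      (measurable_pi_lambda _ fun l => measurable_snd.eval.sub (by split_ifs <;> fun_prop))
      (ae_of_all _ fun x => map_sub_right_eq_self _ _)
  have hbox : MeasurableSet (S j ×ˢ Set.univ.pi fun l => S (j.succAbove l)) :=
    (hS j).prod (.univ_pi fun l => hS _)
  have hset : {X | ∀ i, X i - (if i ∈ K then X j else 0) ∈ S i}
      = MeasurableEquiv.piFinSuccAbove (fun _ => E) j ⁻¹'
          (T ⁻¹' (S j ×ˢ Set.univ.pi fun l => S (j.succAbove l))) := by
    ext X
    simp [T, Fin.forall_iff_succAbove j, hj, Fin.removeNth_apply]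
  rw [hset, (measurePreserving_piFinSuccAbove _ j).measure_preimage
      (hT.measurable hbox).nullMeasurableSet, hT.measure_preimage hbox.nullMeasurableSet,
    Measure.prod_prod, Measure.pi_pi, Fin.prod_univ_succAbove _ j]

end Shear

section Diagonal

variable {E : Type*} [NormedAddCommGroup E] [NormedSpace ℝ E] [MeasurableSpace E] [BorelSpace E]
  [FiniteDimensional ℝ E] (μ : Measure E) [μ.IsAddHaarMeasure] {ι : Type*} [Fintype ι]

theorem measure_pi_setOf_apply_eq_apply [Nontrivial E] {i j : ι} (hij : i ≠ j) :
    Measure.pi (fun _ : ι => μ) {X | X i = X j} = 0 := by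
  classical
  let L : (ι → E) →ₗ[ℝ] E := LinearMap.proj (R := ℝ) (φ := fun _ : ι => E) i - LinearMap.proj j
  obtain ⟨v, hv⟩ := exists_ne (0 : E)
  have hL : LinearMap.ker L ≠ ⊤ := fun h => hv <| by
    simpa [L, hij.symm] using LinearMap.congr_fun (LinearMap.ker_eq_top.1 h) (Pi.single i v)
  convert Measure.addHaar_submodule (Measure.pi fun _ : ι => μ) _ hL using 2
  ext X
  simp [L, sub_eq_zero]

theorem ae_injective_pi [Nontrivial E] : ∀ᵐ X ∂Measure.pi (fun _ : ι => μ), Injective X := by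
  have : ∀ᵐ X ∂Measure.pi (fun _ : ι => μ), ∀ i j, i ≠ j → X i ≠ X j := by
    refine ae_all_iff.2 fun i => ae_all_iff.2 fun j => ?_
    by_cases hij : i = j
    · exact ae_of_all _ fun X h => (h hij).elim
    · filter_upwards [measure_eq_zero_iff_ae_notMem.1 (measure_pi_setOf_apply_eq_apply μ hij)]
        with X hX _ using hX
  filter_upwards [this] with X hX i j h
  by_contra hij
  exact hX i j hij h

end Diagonal

section Shell

variable {E : Type*} [NormedAddCommGroup E]

def shell (r : ℝ) : Set E := {y | r / 2 < ‖y‖ ∧ ‖y‖ < r}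

theorem isOpen_shell (r : ℝ) : IsOpen (shell r : Set E) :=
  (isOpen_lt continuous_const continuous_norm).inter (isOpen_lt continuous_norm continuous_const)

theorem disjoint_shell {r r' : ℝ} (h : r' ≤ r / 2) : Disjoint (shell r : Set E) (shell r') :=
  Set.disjoint_left.2 fun _ hr hr' => by
    simp only [shell, Set.mem_ofPred_eq] at hr hr'
    linarith [hr.1, hr'.2]

variable [NormedSpace ℝ E]

theorem shell_one_nonempty [Nontrivial E] : (shell 1 : Set E).Nonempty := by
  obtain ⟨y, hy⟩ := exists_norm_eq E (by norm_num : (0 : ℝ) ≤ 3 / 4)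
  exact ⟨y, by norm_num [shell, hy]⟩

theorem smul_shell_one {r : ℝ} (hr : 0 < r) : r • (shell 1 : Set E) = shell r := by
  ext y
  rw [Set.mem_smul_set_iff_inv_smul_mem₀ hr.ne']
  simp only [shell, Set.mem_ofPred_eq, norm_smul, Real.norm_eq_abs, abs_inv, abs_of_pos hr]
  rw [← div_eq_inv_mul, lt_div_iff₀ hr, div_lt_iff₀ hr]
  constructor <;> rintro ⟨h1, h2⟩ <;> constructor <;> linarith

theorem measure_shell [MeasurableSpace E] [BorelSpace E] [FiniteDimensional ℝ E] (μ : Measure E)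
    [μ.IsAddHaarMeasure] {r : ℝ} (hr : 0 < r) :
    μ (shell r) = ENNReal.ofReal (r ^ finrank ℝ E) * μ (shell 1) := by
  rw [← smul_shell_one hr, Measure.addHaar_smul_of_nonneg μ hr.le]

end Shell

section Cluster

variable {E : Type*} [NormedAddCommGroup E] {ι : Type*} [DecidableEq ι]

def clusterSet (J : Finset ι) (j : ι) (r : ℝ) : Set (ι → E) :=
  {X | ‖X j‖ < 1 / 2 ∧ (∀ i ∈ J.erase j, X i - X j ∈ shell r) ∧ ∀ i ∉ J, ‖X i‖ < 1}

variable {J : Finset ι} {j : ι} {r : ℝ} {X : ι → E}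

theorem norm_sub_lt_of_mem_clusterSet (hr : 0 < r) (hX : X ∈ clusterSet J j r) {i : ι}
    (hi : i ∈ J) : ‖X i - X j‖ < r := by
  rcases eq_or_ne i j with rfl | hij
  · simpa using hr
  · exact (hX.2.1 i (mem_erase.2 ⟨hij, hi⟩)).2

theorem norm_lt_one_of_mem_clusterSet (hr : 0 < r) (hr' : r ≤ 1 / 2)
    (hX : X ∈ clusterSet J j r) (i : ι) : ‖X i‖ < 1 := by
  by_cases hi : i ∈ J
  · calc ‖X i‖ ≤ ‖X i - X j‖ + ‖X j‖ := norm_le_norm_sub_add _ _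
      _ < r + 1 / 2 := add_lt_add (norm_sub_lt_of_mem_clusterSet hr hX hi) hX.1
      _ ≤ 1 := by linarith
  · exact hX.2.2 i hi

theorem norm_sub_le_of_mem_clusterSet (hr : 0 < r) (hr' : r ≤ 1 / 2)
    (hX : X ∈ clusterSet J j r) (i i' : ι) :
    ‖X i - X i'‖ ≤ 2 * if i ∈ J ∧ i' ∈ J then r else 1 := by
  split_ifs with h
  · calc ‖X i - X i'‖ = ‖(X i - X j) - (X i' - X j)‖ := by rw [sub_sub_sub_cancel_right]
      _ ≤ ‖X i - X j‖ + ‖X i' - X j‖ := norm_sub_le _ _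
      _ ≤ 2 * r := by
        linarith [norm_sub_lt_of_mem_clusterSet hr hX h.1,
          norm_sub_lt_of_mem_clusterSet hr hX h.2]
  · linarith [norm_sub_le (X i) (X i'), norm_lt_one_of_mem_clusterSet hr hr' hX i,
      norm_lt_one_of_mem_clusterSet hr hr' hX i']

theorem clusterSet_subset_pi_ball (hr : 0 < r) (hr' : r ≤ 1 / 2) :
    clusterSet J j r ⊆ Set.univ.pi fun _ : ι => ball (0 : E) 1 :=
  fun _ hX i _ => mem_ball_zero_iff.2 (norm_lt_one_of_mem_clusterSet hr hr' hX i)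

theorem disjoint_clusterSet {i : ι} (hi : i ∈ J) (hij : i ≠ j) {r' : ℝ} (h : r' ≤ r / 2) :
    Disjoint (clusterSet J j r : Set (ι → E)) (clusterSet J j r') :=
  Set.disjoint_left.2 fun _ hX hX' =>
    Set.disjoint_left.1 (disjoint_shell h) (hX.2.1 i (mem_erase.2 ⟨hij, hi⟩))
      (hX'.2.1 i (mem_erase.2 ⟨hij, hi⟩))

theorem isOpen_clusterSet [Finite ι] : IsOpen (clusterSet J j r : Set (ι → E)) := by
  simp only [clusterSet, Set.ofPred_and, Set.ofPred_forall]
  exact (isOpen_lt (by fun_prop) continuous_const).inter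
    ((isOpen_iInter_of_finite fun i => isOpen_iInter_of_finite fun _ =>
      (isOpen_shell r).preimage (by fun_prop)).inter
    (isOpen_iInter_of_finite fun i => isOpen_iInter_of_finite fun _ =>
      isOpen_lt (by fun_prop) continuous_const))

theorem clusterSet_one_nonempty [NormedSpace ℝ E] [Nontrivial E] :
    (clusterSet J j 1 : Set (ι → E)).Nonempty := by
  obtain ⟨y, hy⟩ := shell_one_nonempty (E := E)
  refine ⟨fun i => if i ∈ J.erase j then y else 0, ?_, fun i hi => ?_, fun i hi => ?_⟩
  · simp
  · simpa [hi] using hy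
  · simp [hi]

def clusterFactor (J : Finset ι) (j : ι) (r : ℝ) (i : ι) : Set E :=
  if i = j then ball 0 (1 / 2) else if i ∈ J then shell r else ball 0 1

theorem clusterSet_eq_setOf_sub_ite_mem : clusterSet J j r
    = {X : ι → E | ∀ i, X i - (if i ∈ J.erase j then X j else 0) ∈ clusterFactor J j r i} := by
  ext X
  constructor
  · rintro ⟨hj, hJ, hout⟩ i
    rcases eq_or_ne i j with rfl | hij
    · simpa [clusterFactor] using hj
    by_cases hi : i ∈ J
    · simpa [clusterFactor, hij, hi] using hJ i (mem_erase.2 ⟨hij, hi⟩)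
    · simpa [clusterFactor, hij, hi] using hout i hi
  · intro h
    have hj : ‖X j‖ < 1 / 2 := by simpa [clusterFactor] using h j
    refine ⟨hj, fun i hi => ?_, fun i hi => ?_⟩
    · simpa [clusterFactor, (mem_erase.1 hi).1, (mem_erase.1 hi).2, hi] using h i
    · rcases eq_or_ne i j with rfl | hij
      · linarith
      · simpa [clusterFactor, hij, hi] using h i

end Cluster

theorem one_le_rpow_neg_mul_pow {r s : ℝ} {N : ℕ} (hr : 0 < r) (hr' : r ≤ 1) (hs : N ≤ s) :
    1 ≤ r ^ (-s) * r ^ N := by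
  rw [← Real.rpow_natCast, ← Real.rpow_add hr]
  exact Real.one_le_rpow_of_pos_of_le_one_of_nonpos hr hr' (by linarith)

theorem prod_two_mul_ite_rpow {κ : Type*} (P : Finset κ) (q : κ → Prop) [DecidablePred q]
    (a : κ → ℝ) {r : ℝ} (hr : 0 < r) :
    ∏ p ∈ P, (2 * if q p then r else 1) ^ (-a p)
      = (∏ p ∈ P, (2 : ℝ) ^ (-a p)) * r ^ (-∑ p ∈ P with q p, a p) := by
  rw [← sum_neg_distrib, Real.rpow_sum_of_pos hr, prod_filter, ← prod_mul_distrib]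
  refine prod_congr rfl fun p _ => ?_
  split_ifs <;> simp [Real.mul_rpow, hr.le]

section ClusterMeasure

variable {E : Type*} [NormedAddCommGroup E] [NormedSpace ℝ E] [MeasurableSpace E] [BorelSpace E]
  [FiniteDimensional ℝ E] (μ : Measure E) [μ.IsAddHaarMeasure]
  {m : ℕ} {J : Finset (Fin (m + 1))} {j : Fin (m + 1)} {r : ℝ}

theorem measure_clusterSet (hr : 0 < r) :
    Measure.pi (fun _ => μ) (clusterSet J j r)
      = ENNReal.ofReal (r ^ finrank ℝ E) ^ (J.erase j).card
        * Measure.pi (fun _ => μ) (clusterSet J j 1) := by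
  have hF : ∀ r i, MeasurableSet (clusterFactor J j r i : Set E) := fun r i => by
    unfold clusterFactor
    split_ifs
    exacts [measurableSet_ball, (isOpen_shell r).measurableSet, measurableSet_ball]
  simp only [clusterSet_eq_setOf_sub_ite_mem,
    measure_pi_setOf_sub_ite_mem μ (notMem_erase j J) (hF _)]
  calc ∏ i, μ (clusterFactor J j r i)
      = ∏ i, (if i ∈ J.erase j then ENNReal.ofReal (r ^ finrank ℝ E) else 1)
          * μ (clusterFactor J j 1 i) := prod_congr rfl fun i _ => by
        unfold clusterFactor
        by_cases hij : i = j
        · simp [hij]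
        · by_cases hi : i ∈ J
          · simp [hij, hi, measure_shell μ hr]
          · simp [hij, hi]
    _ = _ := by rw [prod_mul_distrib, prod_ite_mem, univ_inter, prod_const]

theorem le_setLIntegral_clusterSet [Nontrivial E] (hj : j ∈ J)
    {P : Finset (Fin (m + 1) × Fin (m + 1))} (hP : ∀ p ∈ P, p.1 ≠ p.2)
    {a : Fin (m + 1) × Fin (m + 1) → ℝ} (ha : ∀ p ∈ P, 0 ≤ a p)
    (hJ : ((J.card : ℝ) - 1) * finrank ℝ E ≤ ∑ p ∈ P with p.1 ∈ J ∧ p.2 ∈ J, a p)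
    (hr : 0 < r) (hr' : r ≤ 1 / 2) :
    ENNReal.ofReal (∏ p ∈ P, (2 : ℝ) ^ (-a p)) * Measure.pi (fun _ => μ) (clusterSet J j 1)
      ≤ ∫⁻ X in clusterSet J j r, ENNReal.ofReal (∏ p ∈ P, ‖X p.1 - X p.2‖ ^ (-a p))
          ∂Measure.pi (fun _ => μ) := by
  set c := ∏ p ∈ P, (2 : ℝ) ^ (-a p)
  set s := ∑ p ∈ P with p.1 ∈ J ∧ p.2 ∈ J, a p
  have hc : 0 ≤ c := prod_nonneg fun _ _ => by positivity
  have hlower : ∀ X : Fin (m + 1) → E, X ∈ clusterSet J j r → Injective X →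
      c * r ^ (-s) ≤ ∏ p ∈ P, ‖X p.1 - X p.2‖ ^ (-a p) := fun X hX hinj => by
    rw [← prod_two_mul_ite_rpow P _ a hr]
    exact prod_le_prod (fun p _ => by positivity) fun p hp =>
      Real.rpow_le_rpow_of_nonpos (norm_pos_iff.2 (sub_ne_zero.2 (hinj.ne (hP p hp))))
        (norm_sub_le_of_mem_clusterSet hr hr' hX _ _) (neg_nonpos.2 (ha p hp))
  have hmass : 1 ≤ r ^ (-s) * (r ^ finrank ℝ E) ^ (J.erase j).card := by
    rw [← pow_mul]
    refine one_le_rpow_neg_mul_pow hr (by linarith) ?_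
    rw [card_erase_of_mem hj, Nat.cast_mul, Nat.cast_sub (card_pos.2 ⟨j, hj⟩)]
    push_cast
    linarith
  calc ENNReal.ofReal c * Measure.pi (fun _ => μ) (clusterSet J j 1)
      ≤ ENNReal.ofReal (c * r ^ (-s))
          * (ENNReal.ofReal (r ^ finrank ℝ E) ^ (J.erase j).card
            * Measure.pi (fun _ => μ) (clusterSet J j 1)) := by
        rw [← mul_assoc, ← ENNReal.ofReal_pow (by positivity),
          ← ENNReal.ofReal_mul (by positivity), mul_assoc]
        gcongr
        exact le_mul_of_one_le_right hc hmass
    _ = ∫⁻ X in clusterSet J j r, ENNReal.ofReal (c * r ^ (-s)) ∂Measure.pi (fun _ => μ) := by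
        rw [setLIntegral_const, measure_clusterSet μ hr]
    _ ≤ _ := setLIntegral_mono_ae' isOpen_clusterSet.measurableSet <| by
        -- `0 ^ (-a p) = 0` unless `a p = 0`, so the bound needs the points to be distinct.
        filter_upwards [ae_injective_pi μ] with X hinj hX
        exact ENNReal.ofReal_le_ofReal (hlower X hX hinj)

end ClusterMeasure

theorem stmt_5_general (n k : ℕ) (hn : 1 ≤ n)
    (α : Fin (k+1) → Fin (k+1) → ℝ) (hnn : ∀ i j, 0 ≤ α i j)
    (hbad : ∃ J : Finset (Fin (k+1)), 2 ≤ J.card ∧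
      ((J.card : ℝ) - 1) * n ≤ ∑ p ∈ (J ×ˢ J).filter (fun p => p.1 < p.2), α p.1 p.2) :
    ∫⁻ X in Set.univ.pi (fun _ : Fin (k+1) => Metric.ball (0 : EuclideanSpace ℝ (Fin n)) 1),
      ENNReal.ofReal (∏ p ∈ Finset.univ.filter (fun p : Fin (k+1) × Fin (k+1) => p.1 < p.2),
        ‖X p.1 - X p.2‖ ^ (-(α p.1 p.2))) = ⊤ := by
  obtain ⟨J, hJ2, hJsum⟩ := hbad
  have : Nontrivial (EuclideanSpace ℝ (Fin n)) :=
    Module.nontrivial_of_finrank_pos (by rwa [finrank_euclideanSpace_fin])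
  obtain ⟨j, hj⟩ := card_pos.1 (by omega : 0 < J.card)
  obtain ⟨i, hi, hij⟩ := exists_mem_ne (by omega : 1 < J.card) j
  have hr : ∀ t : ℕ, 0 < (1 / 2 : ℝ) ^ (t + 1) ∧ (1 / 2 : ℝ) ^ (t + 1) ≤ 1 / 2 := fun t =>
    ⟨by positivity, pow_le_of_le_one (by norm_num) (by norm_num) t.succ_ne_zero⟩
  have hpairs : (J ×ˢ J).filter (fun p => p.1 < p.2)
      = (univ.filter fun p : Fin (k+1) × Fin (k+1) => p.1 < p.2).filter
          (fun p => p.1 ∈ J ∧ p.2 ∈ J) := by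
    ext p
    simp only [mem_filter, mem_product, mem_univ, true_and]
    tauto
  refine setLIntegral_eq_top_of_pairwise_disjoint
    (A := fun t => clusterSet J j ((1 / 2 : ℝ) ^ (t + 1))) ?_
    (fun t => isOpen_clusterSet.measurableSet) ?_
    (fun t => clusterSet_subset_pi_ball (hr t).1 (hr t).2)
    (fun t => le_setLIntegral_clusterSet volume (a := fun p => α p.1 p.2) hj
      (fun p hp => (mem_filter.1 hp).2.ne) (fun p _ => hnn _ _)
      (by rwa [finrank_euclideanSpace_fin, ← hpairs]) (hr t).1 (hr t).2)
  · exact mul_ne_zero (ENNReal.ofReal_pos.2 (prod_pos fun _ _ => by positivity)).ne'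
      (isOpen_clusterSet.measure_pos _ clusterSet_one_nonempty).ne'
  · refine (pairwise_disjoint_on _).2 fun t t' htt' => disjoint_clusterSet hi hij ?_
    calc (1 / 2 : ℝ) ^ (t' + 1) ≤ (1 / 2) ^ (t + 2) :=
          pow_le_pow_of_le_one (by norm_num) (by norm_num) (by omega)
      _ = (1 / 2) ^ (t + 1) / 2 := by ring

theorem stmt_5 (n k : ℕ) (hn : 1 ≤ n) (hk : 1 ≤ k)
    (α : Fin (k+1) → Fin (k+1) → ℝ) (hnn : ∀ i j, 0 ≤ α i j)
    (hbad : ∃ J : Finset (Fin (k+1)), 2 ≤ J.card ∧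
      ((J.card : ℝ) - 1) * n ≤ ∑ p ∈ (J ×ˢ J).filter (fun p => p.1 < p.2), α p.1 p.2) :
    ∫⁻ X in Set.univ.pi (fun _ : Fin (k+1) => Metric.ball (0 : EuclideanSpace ℝ (Fin n)) 1),
      ENNReal.ofReal (∏ p ∈ Finset.univ.filter (fun p : Fin (k+1) × Fin (k+1) => p.1 < p.2),
        ‖X p.1 - X p.2‖ ^ (-(α p.1 p.2))) = ⊤ :=
  stmt_5_general n k hn α hnn hbad
end

section
/- Let $Q\subset\mathbb{R}^n$ be a cube with center $c_Q$ and side length $\ell$, and let $^*Q$ be the concentric cube with side length $2\ell$. Let $\alpha,\beta\ge 0$. Then there is a dimensional constant $C$ (depending on $\alpha,\beta,n$) such that for all $x_2,x_3\notin{}^*Q$ and $x_1\in Q$: $\Big| |x_1-x_2|^{-\alpha}|x_1-x_3|^{-\beta} - \frac{1}{|Q|}\int_Q |y-x_2|^{-\alpha}|y-x_3|^{-\beta}\,dy \Big| \le C\,\ell\,\big(|x_2-c_Q|^{-1-\alpha}|x_3-c_Q|^{-\beta} + |x_2-c_Q|^{-\alpha}|x_3-c_Q|^{-1-\beta}\big)$.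 -/
/-!
For `y` in the cube `Q` and `x` outside its double, `|x - c_Q| ≤ (1 + √n) |y - x|`, so the
mean value theorem for `t ↦ t ^ (-a)` bounds the oscillation `|k(x₁) - k(y)|` of the kernel
`k(y) = |y - x₂| ^ (-a) * |y - x₃| ^ (-b)` over `Q` by `diam Q` times the claimed expression.
Averaging over `y ∈ Q` keeps that bound.
-/

open MeasureTheory

namespace EuclideanSpace

variable {ι : Type*}

def cube (c : EuclideanSpace ℝ ι) (r : ℝ) : Set (EuclideanSpace ℝ ι) :=
  {y | ∀ i, |y i - c i| ≤ r}

theorem cube_mono {c : EuclideanSpace ℝ ι} {r r' : ℝ} (h : r ≤ r') : cube c r ⊆ cube c r' :=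
  fun _ hy i => (hy i).trans h

theorem isClosed_cube {c : EuclideanSpace ℝ ι} {r : ℝ} : IsClosed (cube c r) := by
  simp only [cube, Set.ofPred_forall]
  exact isClosed_iInter fun i =>
    isClosed_le (((PiLp.continuous_apply 2 _ i).sub continuous_const).abs) continuous_const

variable [Fintype ι]

theorem abs_apply_le_norm (x : EuclideanSpace ℝ ι) (i : ι) : |x i| ≤ ‖x‖ :=
  (Real.norm_eq_abs _).symm.trans_le (PiLp.norm_apply_le x i)

theorem norm_le_sqrt_card_mul {x : EuclideanSpace ℝ ι} {M : ℝ} (hM : 0 ≤ M)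
    (hx : ∀ i, |x i| ≤ M) : ‖x‖ ≤ √(Fintype.card ι) * M := by
  rw [EuclideanSpace.norm_eq, ← Real.sqrt_sq hM, ← Real.sqrt_mul (Nat.cast_nonneg _)]
  gcongr
  calc ∑ i, ‖x i‖ ^ 2 ≤ ∑ _i : ι, M ^ 2 :=
        Finset.sum_le_sum fun i _ => by rw [Real.norm_eq_abs]; gcongr; exact hx i
    _ = Fintype.card ι * M ^ 2 := by simp

variable {c x y z : EuclideanSpace ℝ ι} {r ℓ : ℝ}

theorem closedBall_subset_cube : Metric.closedBall c r ⊆ cube c r := fun y hy i => by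
  rw [Metric.mem_closedBall, dist_eq_norm] at hy
  simpa using (abs_apply_le_norm (y - c) i).trans hy

theorem norm_sub_le_of_mem_cube (hr : 0 ≤ r) (hy : y ∈ cube c r) (hz : z ∈ cube c r) :
    ‖y - z‖ ≤ √(Fintype.card ι) * (2 * r) :=
  norm_le_sqrt_card_mul (by linarith) fun i => by
    have := abs_sub_le (y i) (c i) (z i)
    rw [abs_sub_comm (c i)] at this
    simp only [PiLp.sub_apply]
    linarith [hy i, hz i]

theorem cube_subset_closedBall (hr : 0 ≤ r) :
    cube c r ⊆ Metric.closedBall c (√(Fintype.card ι) * r) := fun y hy => by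
  rw [Metric.mem_closedBall, dist_eq_norm]
  exact norm_le_sqrt_card_mul hr fun i => by simpa using hy i

theorem isCompact_cube : IsCompact (cube c r) :=
  Metric.isCompact_of_isClosed_isBounded isClosed_cube <| Metric.isBounded_closedBall.subset <|
    (cube_mono (le_abs_self r)).trans (cube_subset_closedBall (abs_nonneg r))

theorem lt_norm_sub_of_notMem_cube (hx : x ∉ cube c ℓ) : ℓ < ‖x - c‖ := by
  obtain ⟨j, hj⟩ : ∃ j, ℓ < |x j - c j| := by simpa [cube] using hx
  simpa using hj.trans_le (abs_apply_le_norm (x - c) j)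

theorem norm_sub_le_mul_norm_sub_of_notMem_cube (hx : x ∉ cube c ℓ) (hz : z ∈ cube c (ℓ / 2)) :
    ‖x - c‖ ≤ (1 + √(Fintype.card ι)) * ‖z - x‖ := by
  obtain ⟨j, hj⟩ : ∃ j, ℓ < |x j - c j| := by simpa [cube] using hx
  have hℓ : 0 ≤ ℓ / 2 := (abs_nonneg _).trans (hz j)
  have hzx : ℓ / 2 ≤ ‖z - x‖ := by
    have hj' := (abs_sub_le (x j) (z j) (c j)).trans_lt' hj
    have := abs_apply_le_norm (z - x) j
    rw [PiLp.sub_apply, abs_sub_comm] at this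
    linarith [hz j]
  calc ‖x - c‖ ≤ ‖z - x‖ + ‖z - c‖ := by
        simpa [norm_sub_rev x z] using norm_sub_le_norm_sub_add_norm_sub x z c
    _ ≤ ‖z - x‖ + √(Fintype.card ι) * (ℓ / 2) := by
        gcongr; simpa [dist_eq_norm] using cube_subset_closedBall hℓ hz
    _ ≤ (1 + √(Fintype.card ι)) * ‖z - x‖ := by nlinarith [Real.sqrt_nonneg (Fintype.card ι)]

end EuclideanSpace

namespace Real

variable {a b m s t : ℝ}

theorem abs_rpow_neg_sub_rpow_neg_le (ha : 0 ≤ a) (hm : 0 < m) (hs : m ≤ s) (ht : m ≤ t) :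
    |s ^ (-a) - t ^ (-a)| ≤ a * m ^ (-a - 1) * |s - t| := by
  have hderiv : ∀ x ∈ Set.Ici m, HasDerivWithinAt (fun x : ℝ => x ^ (-a))
      (-a * x ^ (-a - 1)) (Set.Ici m) x := fun x hx =>
    (hasDerivAt_rpow_const (Or.inl (hm.trans_le hx).ne')).hasDerivWithinAt
  have hbound : ∀ x ∈ Set.Ici m, ‖-a * x ^ (-a - 1)‖ ≤ a * m ^ (-a - 1) := fun x hx => by
    rw [norm_mul, norm_neg, norm_of_nonneg ha, norm_of_nonneg (rpow_nonneg (hm.le.trans hx) _)]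
    exact mul_le_mul_of_nonneg_left (rpow_le_rpow_of_nonpos hm hx (by linarith)) ha
  simpa [norm_eq_abs] using
    (convex_Ici m).norm_image_sub_le_of_norm_hasDerivWithin_le hderiv hbound ht hs

theorem abs_rpow_neg_mul_rpow_neg_sub_le (ha : 0 ≤ a) (hb : 0 ≤ b) {μ ν s' t' : ℝ}
    (hμ : 0 < μ) (hν : 0 < ν) (hs : μ ≤ s) (hs' : μ ≤ s') (ht : ν ≤ t) (ht' : ν ≤ t') :
    |s ^ (-a) * t ^ (-b) - s' ^ (-a) * t' ^ (-b)| ≤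
      a * μ ^ (-a - 1) * ν ^ (-b) * |s - s'| + b * μ ^ (-a) * ν ^ (-b - 1) * |t - t'| := by
  have hs'a : s' ^ (-a) ≤ μ ^ (-a) := rpow_le_rpow_of_nonpos hμ hs' (by linarith)
  have htb : t ^ (-b) ≤ ν ^ (-b) := rpow_le_rpow_of_nonpos hν ht (by linarith)
  have hs'a₀ : 0 ≤ s' ^ (-a) := rpow_nonneg (hμ.le.trans hs') _
  have htb₀ : 0 ≤ t ^ (-b) := rpow_nonneg (hν.le.trans ht) _
  have hsa := abs_rpow_neg_sub_rpow_neg_le ha hμ hs hs'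
  have htb' := abs_rpow_neg_sub_rpow_neg_le hb hν ht ht'
  calc |s ^ (-a) * t ^ (-b) - s' ^ (-a) * t' ^ (-b)|
      = |(s ^ (-a) - s' ^ (-a)) * t ^ (-b) + s' ^ (-a) * (t ^ (-b) - t' ^ (-b))| := by ring_nf
    _ ≤ |s ^ (-a) - s' ^ (-a)| * t ^ (-b) + s' ^ (-a) * |t ^ (-b) - t' ^ (-b)| := by
        refine (abs_add_le _ _).trans_eq ?_
        rw [abs_mul, abs_mul, abs_of_nonneg htb₀, abs_of_nonneg hs'a₀]
    _ ≤ (a * μ ^ (-a - 1) * |s - s'|) * ν ^ (-b) + μ ^ (-a) * (b * ν ^ (-b - 1) * |t - t'|) := by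
        gcongr
    _ = _ := by ring

theorem div_rpow_neg {x y : ℝ} (hx : 0 ≤ x) (hy : 0 ≤ y) (p : ℝ) :
    (x / y) ^ (-p) = y ^ p * x ^ (-p) := by
  rw [div_rpow hx hy, rpow_neg hy, div_inv_eq_mul, mul_comm]

end Real

theorem abs_sub_setAverage_le {α : Type*} [MeasurableSpace α] {μ : Measure α} {s : Set α}
    {f : α → ℝ} {x : α} {B : ℝ} (hs : MeasurableSet s) (h₀ : μ s ≠ 0) (hfin : μ s ≠ ⊤)
    (hf : IntegrableOn f s μ) (hB : ∀ y ∈ s, |f x - f y| ≤ B) :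
    |f x - (μ s).toReal⁻¹ * ∫ y in s, f y ∂μ| ≤ B := by
  have := (convex_closedBall (f x) B).set_average_mem Metric.isClosed_closedBall h₀ hfin
    (ae_restrict_of_forall_mem hs fun y hy => by
      rw [Metric.mem_closedBall, Real.dist_eq, abs_sub_comm]; exact hB y hy) hf
  rwa [setAverage_eq, smul_eq_mul, Metric.mem_closedBall, Real.dist_eq, abs_sub_comm] at this

namespace EuclideanSpace

variable {ι : Type*} [Fintype ι]

theorem abs_kernel_sub_le_of_mem_cube {a b ℓ : ℝ} (ha : 0 ≤ a) (hb : 0 ≤ b) (hℓ : 0 ≤ ℓ)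
    {c x₂ x₃ y z : EuclideanSpace ℝ ι} (h₂ : x₂ ∉ cube c ℓ) (h₃ : x₃ ∉ cube c ℓ)
    (hy : y ∈ cube c (ℓ / 2)) (hz : z ∈ cube c (ℓ / 2)) :
    |‖y - x₂‖ ^ (-a) * ‖y - x₃‖ ^ (-b) - ‖z - x₂‖ ^ (-a) * ‖z - x₃‖ ^ (-b)| ≤
      (a + b) * √(Fintype.card ι) * (1 + √(Fintype.card ι)) ^ (a + b + 1) * ℓ *
        (‖x₂ - c‖ ^ (-1 - a) * ‖x₃ - c‖ ^ (-b) + ‖x₂ - c‖ ^ (-a) * ‖x₃ - c‖ ^ (-1 - b)) := by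
  set N := √(Fintype.card ι)
  set K := 1 + N
  have hK : 0 < K := by positivity
  have hlower : ∀ {x w}, x ∉ cube c ℓ → w ∈ cube c (ℓ / 2) → ‖x - c‖ / K ≤ ‖w - x‖ :=
    fun hx hw => div_le_of_le_mul₀ hK.le (norm_nonneg _)
      (by rw [mul_comm]; exact norm_sub_le_mul_norm_sub_of_notMem_cube hx hw)
  have hdist : ∀ x, |‖y - x‖ - ‖z - x‖| ≤ N * ℓ := fun x =>
    (abs_norm_sub_norm_le _ _).trans <| by
      simpa [mul_div_cancel₀] using norm_sub_le_of_mem_cube (by positivity) hy hz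
  have hm₂ : 0 < ‖x₂ - c‖ := hℓ.trans_lt (lt_norm_sub_of_notMem_cube h₂)
  have hm₃ : 0 < ‖x₃ - c‖ := hℓ.trans_lt (lt_norm_sub_of_notMem_cube h₃)
  have hrescale : ∀ {m : ℝ} (p : ℝ), 0 < m →
      (m / K) ^ (-p - 1) = K ^ p * K * m ^ (-1 - p) ∧ (m / K) ^ (-p) = K ^ p * m ^ (-p) :=
    fun p hm => ⟨by rw [show -p - 1 = -(p + 1) by ring, Real.div_rpow_neg hm.le hK.le,
      Real.rpow_add hK, Real.rpow_one, show -(p + 1) = -1 - p by ring],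
      Real.div_rpow_neg hm.le hK.le p⟩
  set X := ‖x₂ - c‖ ^ (-1 - a) * ‖x₃ - c‖ ^ (-b)
  set Y := ‖x₂ - c‖ ^ (-a) * ‖x₃ - c‖ ^ (-1 - b)
  have hX : 0 ≤ X := by positivity
  have hY : 0 ≤ Y := by positivity
  calc _ ≤ a * (‖x₂ - c‖ / K) ^ (-a - 1) * (‖x₃ - c‖ / K) ^ (-b) * |‖y - x₂‖ - ‖z - x₂‖| +
          b * (‖x₂ - c‖ / K) ^ (-a) * (‖x₃ - c‖ / K) ^ (-b - 1) * |‖y - x₃‖ - ‖z - x₃‖| :=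
        Real.abs_rpow_neg_mul_rpow_neg_sub_le ha hb (by positivity) (by positivity)
          (hlower h₂ hy) (hlower h₂ hz) (hlower h₃ hy) (hlower h₃ hz)
    _ ≤ a * (‖x₂ - c‖ / K) ^ (-a - 1) * (‖x₃ - c‖ / K) ^ (-b) * (N * ℓ) +
          b * (‖x₂ - c‖ / K) ^ (-a) * (‖x₃ - c‖ / K) ^ (-b - 1) * (N * ℓ) := by
        gcongr <;> apply hdist
    _ = N * K ^ a * K ^ b * K * ℓ * (a * X + b * Y) := by
        rw [(hrescale a hm₂).1, (hrescale a hm₂).2, (hrescale b hm₃).1, (hrescale b hm₃).2]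
        ring
    _ ≤ N * K ^ a * K ^ b * K * ℓ * ((a + b) * (X + Y)) := by
        gcongr; nlinarith
    _ = _ := by rw [Real.rpow_add hK, Real.rpow_add hK, Real.rpow_one]; ring

end EuclideanSpace

open EuclideanSpace in
theorem stmt_18_general (n : ℕ) (a b : ℝ) (ha : 0 ≤ a) (hb : 0 ≤ b) :
    ∃ C : ℝ, ∀ (c : EuclideanSpace ℝ (Fin n)) (ℓ : ℝ), 0 < ℓ →
      ∀ x₁ x₂ x₃ : EuclideanSpace ℝ (Fin n),
        x₁ ∈ {y : EuclideanSpace ℝ (Fin n) | ∀ i, |y i - c i| ≤ ℓ/2} →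
        x₂ ∉ {y : EuclideanSpace ℝ (Fin n) | ∀ i, |y i - c i| ≤ ℓ} →
        x₃ ∉ {y : EuclideanSpace ℝ (Fin n) | ∀ i, |y i - c i| ≤ ℓ} →
        |‖x₁ - x₂‖ ^ (-a) * ‖x₁ - x₃‖ ^ (-b) -
            (volume {y : EuclideanSpace ℝ (Fin n) | ∀ i, |y i - c i| ≤ ℓ/2}).toReal⁻¹ *
              ∫ y in {y : EuclideanSpace ℝ (Fin n) | ∀ i, |y i - c i| ≤ ℓ/2},
                ‖y - x₂‖ ^ (-a) * ‖y - x₃‖ ^ (-b)| ≤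
          C * ℓ * (‖x₂ - c‖ ^ (-1 - a) * ‖x₃ - c‖ ^ (-b) +
            ‖x₂ - c‖ ^ (-a) * ‖x₃ - c‖ ^ (-1 - b)) := by
  refine ⟨(a + b) * √n * (1 + √n) ^ (a + b + 1), fun c ℓ hℓ x₁ x₂ x₃ h₁ h₂ h₃ => ?_⟩
  change x₁ ∈ cube c (ℓ / 2) at h₁
  change x₂ ∉ cube c ℓ at h₂
  change x₃ ∉ cube c ℓ at h₃
  have hne : ∀ {x y}, x ∉ cube c ℓ → y ∈ cube c (ℓ / 2) → ‖y - x‖ ≠ 0 := fun hx hy =>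
    norm_ne_zero_iff.2 <| sub_ne_zero.2 fun hyx => hx <| hyx ▸ cube_mono (by linarith) hy
  have hint : IntegrableOn (fun y => ‖y - x₂‖ ^ (-a) * ‖y - x₃‖ ^ (-b)) (cube c (ℓ / 2)) :=
    ContinuousOn.integrableOn_compact isCompact_cube <| ContinuousOn.mul
      ((continuous_id.sub continuous_const).norm.continuousOn.rpow_const
        fun y hy => Or.inl (hne h₂ hy))
      ((continuous_id.sub continuous_const).norm.continuousOn.rpow_const
        fun y hy => Or.inl (hne h₃ hy))
  have hvol : 0 < volume (cube c (ℓ / 2)) :=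
    (Metric.measure_closedBall_pos volume c (half_pos hℓ)).trans_le
      (measure_mono closedBall_subset_cube)
  refine abs_sub_setAverage_le isClosed_cube.measurableSet hvol.ne'
    isCompact_cube.measure_lt_top.ne hint fun y hy => ?_
  simpa using abs_kernel_sub_le_of_mem_cube ha hb hℓ.le h₂ h₃ h₁ hy

theorem stmt_18 (n : ℕ) (hn : 1 ≤ n) (a b : ℝ) (ha : 0 ≤ a) (hb : 0 ≤ b) :
    ∃ C : ℝ, ∀ (c : EuclideanSpace ℝ (Fin n)) (ℓ : ℝ), 0 < ℓ →
      ∀ x₁ x₂ x₃ : EuclideanSpace ℝ (Fin n),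
        x₁ ∈ {y : EuclideanSpace ℝ (Fin n) | ∀ i, |y i - c i| ≤ ℓ/2} →
        x₂ ∉ {y : EuclideanSpace ℝ (Fin n) | ∀ i, |y i - c i| ≤ ℓ} →
        x₃ ∉ {y : EuclideanSpace ℝ (Fin n) | ∀ i, |y i - c i| ≤ ℓ} →
        |‖x₁ - x₂‖ ^ (-a) * ‖x₁ - x₃‖ ^ (-b) -
            (volume {y : EuclideanSpace ℝ (Fin n) | ∀ i, |y i - c i| ≤ ℓ/2}).toReal⁻¹ *
              ∫ y in {y : EuclideanSpace ℝ (Fin n) | ∀ i, |y i - c i| ≤ ℓ/2},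
                ‖y - x₂‖ ^ (-a) * ‖y - x₃‖ ^ (-b)| ≤
          C * ℓ * (‖x₂ - c‖ ^ (-1 - a) * ‖x₃ - c‖ ^ (-b) +
            ‖x₂ - c‖ ^ (-a) * ‖x₃ - c‖ ^ (-1 - b)) :=
  stmt_18_general n a b ha hb
end
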